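/- Let A = {(z,0) : z ∈ ℤ} and B = {(0,n) : n ∈ ℤ} be subgroups of ℤ[1/2] ⋊ ℤ, and let φ : A → B be the isomorphism φ(z,0) = (0,z). Then the Baumslag group G_(1,2) is isomorphic to the HNN extension of ℤ[1/2] ⋊ ℤ with associated subgroups A and B and associating isomorphism φ, via an isomorphism sending the generator a of G_(1,2) to the image of (1,0) and the generator b to the stable letter. -/

import Mathlib

/-- A rational number is *dyadic* (an element of ℤ[1/2]) if it has the form `u·2^x`
with `u, x ∈ ℤ`. -/
def IsDyadic (q : ℚ) : Prop := ∃ u x : ℤ, q = (u : ℚ) * 2 ^ x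

theorem isDyadic_int (z : ℤ) : IsDyadic (z : ℚ) := ⟨z, 0, by norm_num⟩

theorem isDyadic_zero : IsDyadic (0 : ℚ) := ⟨0, 0, by norm_num⟩

theorem isDyadic_one : IsDyadic (1 : ℚ) := ⟨1, 0, by norm_num⟩

theorem IsDyadic.add {a b : ℚ} (ha : IsDyadic a) (hb : IsDyadic b) : IsDyadic (a + b) := by
  obtain ⟨u, x, rfl⟩ := ha
  obtain ⟨v, y, rfl⟩ := hb
  rcases le_total x y with h | h
  · refine ⟨u + v * 2 ^ (y - x).toNat, x, ?_⟩
    have h2 : (((y - x).toNat : ℤ)) = y - x := Int.toNat_of_nonneg (by omega)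
    have h3 : (2 : ℚ) ^ ((y - x).toNat) = (2 : ℚ) ^ (y - x : ℤ) := by
      rw [← zpow_natCast (2 : ℚ) (y - x).toNat, h2]
    have h4 : y - x + x = y := by omega
    push_cast
    rw [h3, add_mul, mul_assoc, ← zpow_add₀ (by norm_num : (2:ℚ) ≠ 0), h4]
  · refine ⟨u * 2 ^ (x - y).toNat + v, y, ?_⟩
    have h2 : (((x - y).toNat : ℤ)) = x - y := Int.toNat_of_nonneg (by omega)
    have h3 : (2 : ℚ) ^ ((x - y).toNat) = (2 : ℚ) ^ (x - y : ℤ) := by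
      rw [← zpow_natCast (2 : ℚ) (x - y).toNat, h2]
    have h4 : x - y + y = x := by omega
    push_cast
    rw [h3, add_mul, mul_assoc, ← zpow_add₀ (by norm_num : (2:ℚ) ≠ 0), h4]

theorem IsDyadic.neg {a : ℚ} (ha : IsDyadic a) : IsDyadic (-a) := by
  obtain ⟨u, x, rfl⟩ := ha
  exact ⟨-u, x, by push_cast; ring⟩

theorem IsDyadic.zpow_mul (x : ℤ) {a : ℚ} (ha : IsDyadic a) : IsDyadic (2 ^ x * a) := by
  obtain ⟨u, y, rfl⟩ := ha
  exact ⟨u, x + y, by rw [zpow_add₀ (by norm_num : (2:ℚ) ≠ 0)]; ring⟩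

theorem IsDyadic.mul_zpow {a : ℚ} (ha : IsDyadic a) (x : ℤ) : IsDyadic (a * 2 ^ x) := by
  obtain ⟨u, y, rfl⟩ := ha
  exact ⟨u, y + x, by rw [zpow_add₀ (by norm_num : (2:ℚ) ≠ 0)]; ring⟩

/-- The additive group ℤ[1/2] of dyadic rationals. -/
def ZHalf : Type := {q : ℚ // IsDyadic q}

/-- The semidirect product ℤ[1/2] ⋊ ℤ: pairs `(r, m)` with `r ∈ ℤ[1/2]`, `m ∈ ℤ`,
and multiplication `(r, m)·(s, n) = (r + 2^m·s, m + n)`. -/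
def SDP : Type := ZHalf × ℤ

instance : Group SDP where
  mul p q := (⟨p.1.1 + 2 ^ p.2 * q.1.1, p.1.2.add (IsDyadic.zpow_mul _ q.1.2)⟩, p.2 + q.2)
  one := (⟨0, isDyadic_zero⟩, 0)
  inv p := (⟨-(2 ^ (-p.2) * p.1.1), (IsDyadic.zpow_mul _ p.1.2).neg⟩, -p.2)
  mul_assoc p q r := by
    refine Prod.ext (Subtype.ext ?_) ?_
    · show (p.1.1 + 2 ^ p.2 * q.1.1) + 2 ^ (p.2 + q.2) * r.1.1
        = p.1.1 + 2 ^ p.2 * (q.1.1 + 2 ^ q.2 * r.1.1)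
      rw [zpow_add₀ (by norm_num : (2:ℚ) ≠ 0)]; ring
    · show p.2 + q.2 + r.2 = p.2 + (q.2 + r.2); ring
  one_mul p := by
    refine Prod.ext (Subtype.ext ?_) ?_
    · show (0 : ℚ) + 2 ^ (0 : ℤ) * p.1.1 = p.1.1
      norm_num
    · show 0 + p.2 = p.2; ring
  mul_one p := by
    refine Prod.ext (Subtype.ext ?_) ?_
    · show p.1.1 + 2 ^ p.2 * 0 = p.1.1
      ring
    · show p.2 + 0 = p.2; ring
  inv_mul_cancel p := by
    refine Prod.ext (Subtype.ext ?_) ?_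
    · show -(2 ^ (-p.2) * p.1.1) + 2 ^ (-p.2) * p.1.1 = (0 : ℚ)
      ring
    · show -p.2 + p.2 = 0; ring

@[simp] theorem SDP.mul_fst (p q : SDP) : (p * q).1.1 = p.1.1 + 2 ^ p.2 * q.1.1 := rfl
@[simp] theorem SDP.mul_snd (p q : SDP) : (p * q).2 = p.2 + q.2 := rfl
@[simp] theorem SDP.one_fst : (1 : SDP).1.1 = 0 := rfl
@[simp] theorem SDP.one_snd : (1 : SDP).2 = 0 := rfl
@[simp] theorem SDP.inv_fst (p : SDP) : (p⁻¹).1.1 = -(2 ^ (-p.2) * p.1.1) := rfl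
@[simp] theorem SDP.inv_snd (p : SDP) : (p⁻¹).2 = -p.2 := rfl

/-- The single relator `(b a b⁻¹) a (b a b⁻¹)⁻¹ a⁻²` of the Baumslag group G_(1,2),
with `a` the generator of index `0` and `b` the generator of index `1`. -/
def baumRels : Set (FreeGroup (Fin 2)) :=
  {(FreeGroup.of 1 * FreeGroup.of 0 * (FreeGroup.of 1)⁻¹) * FreeGroup.of 0 *
      (FreeGroup.of 1 * FreeGroup.of 0 * (FreeGroup.of 1)⁻¹)⁻¹ *
      (FreeGroup.of 0 * FreeGroup.of 0)⁻¹}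

/-- The Baumslag group G_(1,2) = ⟨a, b ∣ (b a b⁻¹) a (b a b⁻¹)⁻¹ = a²⟩. -/
abbrev Baumslag : Type := PresentedGroup baumRels

/-- The generator `a` of the Baumslag group. -/
def bgA : Baumslag := PresentedGroup.of 0

/-- The generator `b` of the Baumslag group. -/
def bgB : Baumslag := PresentedGroup.of 1

/-- The subgroup A = {(z, 0) : z ∈ ℤ} of ℤ[1/2] ⋊ ℤ. -/
def Asub : Subgroup SDP where
  carrier := {p | (∃ z : ℤ, p.1.1 = (z : ℚ)) ∧ p.2 = 0}
  one_mem' := ⟨⟨0, by norm_num⟩, rfl⟩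
  mul_mem' := by
    rintro p q ⟨⟨zp, hzp⟩, hp0⟩ ⟨⟨zq, hzq⟩, hq0⟩
    refine ⟨⟨zp + zq, ?_⟩, ?_⟩
    · show p.1.1 + 2 ^ p.2 * q.1.1 = _
      rw [hp0, hzp, hzq]
      push_cast
      norm_num
    · show p.2 + q.2 = 0
      omega
  inv_mem' := by
    rintro p ⟨⟨z, hz⟩, h0⟩
    refine ⟨⟨-z, ?_⟩, ?_⟩
    · show -(2 ^ (-p.2) * p.1.1) = _
      rw [h0, hz]
      push_cast
      norm_num
    · show -p.2 = 0
      omega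

/-- The subgroup B = {(0, n) : n ∈ ℤ} of ℤ[1/2] ⋊ ℤ. -/
def Bsub : Subgroup SDP where
  carrier := {p | p.1.1 = 0}
  one_mem' := rfl
  mul_mem' := by
    rintro p q hp hq
    show p.1.1 + 2 ^ p.2 * q.1.1 = 0
    rw [hp, hq]
    ring
  inv_mem' := by
    rintro p hp
    show -(2 ^ (-p.2) * p.1.1) = 0
    rw [hp]
    ring

/-- The isomorphism φ : A → B, φ(z, 0) = (0, z). -/
noncomputable def swapAB : Asub ≃* Bsub where
  toFun p := ⟨(⟨0, isDyadic_zero⟩, p.2.1.choose), rfl⟩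
  invFun q := ⟨(⟨(q.1.2 : ℚ), isDyadic_int _⟩, 0), ⟨q.1.2, rfl⟩, rfl⟩
  left_inv p := by
    obtain ⟨⟨⟨r, hd⟩, m⟩, hmem⟩ := p
    have h1 : r = ((hmem.1.choose : ℤ) : ℚ) := hmem.1.choose_spec
    exact Subtype.ext (Prod.ext (Subtype.ext h1.symm) hmem.2.symm)
  right_inv q := by
    obtain ⟨⟨⟨r, hd⟩, m⟩, hmem⟩ := q
    have hr : r = 0 := hmem
    have hex : ∃ z : ℤ, ((m : ℚ)) = (z : ℚ) := ⟨m, rfl⟩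
    have h1 : ((m : ℚ)) = ((hex.choose : ℤ) : ℚ) := hex.choose_spec
    have h2 : hex.choose = m := by exact_mod_cast h1.symm
    exact Subtype.ext (Prod.ext (Subtype.ext hr.symm) h2)
  map_mul' p q := by
    have h1 := (p * q).2.1.choose_spec
    have h2 := p.2.1.choose_spec
    have h3 := q.2.1.choose_spec
    have hp0 : p.1.2 = 0 := p.2.2
    have key : (((p * q).2.1.choose : ℤ) : ℚ)
        = ((p.2.1.choose : ℤ) : ℚ) + ((q.2.1.choose : ℤ) : ℚ) := by
      rw [← h1, ← h2, ← h3]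
      show p.1.1.1 + 2 ^ p.1.2 * q.1.1.1 = p.1.1.1 + q.1.1.1
      rw [hp0]
      norm_num
    have hz : (p * q).2.1.choose = p.2.1.choose + q.2.1.choose := by exact_mod_cast key
    exact Subtype.ext (Prod.ext (Subtype.ext (by show (0:ℚ) = 0 + 2 ^ _ * 0; ring)) hz)

/-! In `G_(1,2)` the element `c = b a b⁻¹` satisfies `c a c⁻¹ = a²`, and `ℤ[1/2] ⋊ ℤ` is
`⟨(1,0), (0,1) ∣ (0,1)(1,0)(0,1)⁻¹ = (1,0)²⟩`: sending `(u·2^x, m)` to `c^x a^u c^(-x) c^m` is a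
well-defined homomorphism `ℤ[1/2] ⋊ ℤ → G_(1,2)`, and together with `t ↦ b` it respects the HNN
relation because `b a^z b⁻¹ = c^z`. Conversely `a ↦ (1,0)`, `b ↦ t` respects the defining relation
since `t (1,0) t⁻¹ = (0,1)`. The two maps are inverse to each other on generators. -/

namespace SDP

def a : SDP := (⟨1, isDyadic_one⟩, 0)

def t : SDP := (⟨0, isDyadic_zero⟩, 1)

@[simp] theorem a_fst : a.1.1 = 1 := rfl
@[simp] theorem a_snd : a.2 = 0 := rfl
@[simp] theorem t_fst : t.1.1 = 0 := rfl
@[simp] theorem t_snd : t.2 = 1 := rfl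

@[simp] theorem a_zpow_snd (u : ℤ) : (a ^ u).2 = 0 := by
  induction u using Int.induction_on with
  | zero => rfl
  | succ n ih => rw [zpow_add_one, mul_snd, ih, a_snd, add_zero]
  | pred n ih => rw [zpow_sub_one, mul_snd, ih, inv_snd, a_snd, neg_zero, add_zero]

@[simp] theorem a_zpow_fst (u : ℤ) : (a ^ u).1.1 = u := by
  induction u using Int.induction_on with
  | zero => rfl
  | succ n ih => rw [zpow_add_one, mul_fst, ih, a_zpow_snd, a_fst]; push_cast; ring
  | pred n ih => rw [zpow_sub_one, mul_fst, ih, a_zpow_snd, inv_fst, a_fst, a_snd]; push_cast; ring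

@[simp] theorem t_zpow_fst (n : ℤ) : (t ^ n).1.1 = 0 := by
  induction n using Int.induction_on with
  | zero => rfl
  | succ n ih => rw [zpow_add_one, mul_fst, ih, t_fst]; ring
  | pred n ih => rw [zpow_sub_one, mul_fst, ih, inv_fst, t_fst]; ring

@[simp] theorem t_zpow_snd (n : ℤ) : (t ^ n).2 = n := by
  induction n using Int.induction_on with
  | zero => rfl
  | succ n ih => rw [zpow_add_one, mul_snd, ih, t_snd]
  | pred n ih => rw [zpow_sub_one, mul_snd, ih, inv_snd, t_snd]; ring

theorem t_mul_a_mul_t_inv : t * a * t⁻¹ = a ^ 2 := by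
  rw [sq]
  refine Prod.ext (Subtype.ext ?_) ?_ <;> norm_num

theorem eq_zpow_conj_zpow_mul_zpow (p : SDP) {u x : ℤ} (hp : p.1.1 = u * 2 ^ x) :
    p = t ^ x * a ^ u * t ^ (-x) * t ^ p.2 := by
  refine Prod.ext (Subtype.ext ?_) ?_ <;> simp [hp, mul_comm]

theorem hom_ext {G : Type*} [Group G] {f g : SDP →* G} (ha : f a = g a) (ht : f t = g t) :
    f = g := by
  ext p
  obtain ⟨u, x, hp⟩ := p.1.2
  rw [eq_zpow_conj_zpow_mul_zpow p hp]
  simp only [map_mul, map_zpow, ha, ht]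

end SDP

section DyadicPow

variable {H : Type*} [Group H] {α γ : H}

theorem conj_zpow_eq_zpow_two_pow_mul (h : γ * α * γ⁻¹ = α ^ 2) (k : ℕ) (u : ℤ) :
    γ ^ (k : ℤ) * α ^ u * γ ^ (-(k : ℤ)) = α ^ (2 ^ k * u) := by
  induction k generalizing u with
  | zero => simp
  | succ k ih =>
    have hconj : γ * α ^ u * γ⁻¹ = α ^ (2 * u) := by
      rw [← conj_zpow, h, ← zpow_natCast, ← zpow_mul]
      rfl
    calc γ ^ ((k + 1 : ℕ) : ℤ) * α ^ u * γ ^ (-((k + 1 : ℕ) : ℤ))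
        = γ ^ (k : ℤ) * (γ * α ^ u * γ⁻¹) * γ ^ (-(k : ℤ)) := by
          push_cast
          rw [zpow_add_one, neg_add, zpow_add, zpow_neg_one]
          group
      _ = α ^ (2 ^ (k + 1) * u) := by rw [hconj, ih, pow_succ, mul_assoc]

theorem conj_zpow_two_pow_mul_eq (h : γ * α * γ⁻¹ = α ^ 2) (x : ℤ) (k : ℕ) (u : ℤ) :
    γ ^ x * α ^ (2 ^ k * u) * γ ^ (-x) = γ ^ (x + k) * α ^ u * γ ^ (-(x + k)) := by
  rw [← conj_zpow_eq_zpow_two_pow_mul h, neg_add, zpow_add, zpow_add]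
  group

theorem conj_zpow_eq_of_mul_two_zpow_eq (h : γ * α * γ⁻¹ = α ^ 2) {u v x y : ℤ}
    (huv : (u : ℚ) * 2 ^ x = v * 2 ^ y) :
    γ ^ x * α ^ u * γ ^ (-x) = γ ^ y * α ^ v * γ ^ (-y) := by
  wlog hxy : x ≤ y generalizing u v x y
  · exact (this huv.symm (le_of_not_ge hxy)).symm
  obtain ⟨k, rfl⟩ := Int.le.dest hxy
  have hu : u = 2 ^ k * v := by
    have : (u : ℚ) = 2 ^ k * v := by
      rw [zpow_add₀ two_ne_zero, zpow_natCast] at huv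
      exact mul_right_cancel₀ (zpow_ne_zero x two_ne_zero) (huv.trans (by ring))
    exact_mod_cast this
  rw [hu, conj_zpow_two_pow_mul_eq h]

/-- Under `γ α γ⁻¹ = α²`, this is the power `α ^ q` for `q = u·2^x ∈ ℤ[1/2]`. -/
noncomputable def dyadicPow (α γ : H) (q : ZHalf) : H :=
  γ ^ q.2.choose_spec.choose * α ^ q.2.choose * γ ^ (-q.2.choose_spec.choose)

theorem dyadicPow_eq (h : γ * α * γ⁻¹ = α ^ 2) {q : ZHalf} {u x : ℤ}
    (hq : q.1 = u * 2 ^ x) : dyadicPow α γ q = γ ^ x * α ^ u * γ ^ (-x) :=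
  conj_zpow_eq_of_mul_two_zpow_eq h (q.2.choose_spec.choose_spec.symm.trans hq)

theorem dyadicPow_eq_mul_conj (h : γ * α * γ⁻¹ = α ^ 2) {p q r : ZHalf} {m : ℤ}
    (hr : r.1 = p.1 + 2 ^ m * q.1) :
    dyadicPow α γ r = dyadicPow α γ p * (γ ^ m * dyadicPow α γ q * γ ^ (-m)) := by
  obtain ⟨u, x, hu⟩ := p.2
  obtain ⟨v, y, hv⟩ := q.2
  obtain ⟨k, hk⟩ := Int.le.dest (min_le_left x (m + y))
  obtain ⟨l, hl⟩ := Int.le.dest (min_le_right x (m + y))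
  set w := min x (m + y)
  have hr' : r.1 = ((2 ^ k * u + 2 ^ l * v : ℤ) : ℚ) * 2 ^ w := by
    rw [hr, hu, hv, mul_left_comm, ← zpow_add₀ two_ne_zero, ← hk, ← hl]
    push_cast
    rw [zpow_add₀ two_ne_zero, zpow_add₀ two_ne_zero, zpow_natCast, zpow_natCast]
    ring
  rw [dyadicPow_eq h hr', dyadicPow_eq h hu, dyadicPow_eq h hv, zpow_add,
    show γ ^ w * (α ^ (2 ^ k * u) * α ^ (2 ^ l * v)) * γ ^ (-w)
      = (γ ^ w * α ^ (2 ^ k * u) * γ ^ (-w)) * (γ ^ w * α ^ (2 ^ l * v) * γ ^ (-w)) by group,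
    conj_zpow_two_pow_mul_eq h, conj_zpow_two_pow_mul_eq h, hk, hl, neg_add, zpow_add,
    zpow_add]
  group

end DyadicPow

namespace SDP

variable {H : Type*} [Group H] {α γ : H}

noncomputable def lift (h : γ * α * γ⁻¹ = α ^ 2) : SDP →* H where
  toFun p := dyadicPow α γ p.1 * γ ^ p.2
  map_one' := by
    rw [dyadicPow_eq h (u := 0) (x := 0) (by simp)]
    simp
  map_mul' p q := by
    rw [dyadicPow_eq_mul_conj h (p := p.1) (q := q.1) (m := p.2) (mul_fst p q), mul_snd]
    group

theorem lift_a (h : γ * α * γ⁻¹ = α ^ 2) : lift h a = α := by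
  show dyadicPow α γ a.1 * γ ^ a.2 = α
  rw [dyadicPow_eq h (u := 1) (x := 0) (by simp)]
  simp

theorem lift_t (h : γ * α * γ⁻¹ = α ^ 2) : lift h t = γ := by
  show dyadicPow α γ t.1 * γ ^ t.2 = γ
  rw [dyadicPow_eq h (u := 0) (x := 0) (by simp)]
  simp

end SDP

def bgC : Baumslag := bgB * bgA * bgB⁻¹

theorem bgC_mul_bgA_mul_bgC_inv : bgC * bgA * bgC⁻¹ = bgA ^ 2 := by
  have h := PresentedGroup.one_of_mem (rels := baumRels) rfl
  simp only [map_mul, map_inv] at h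
  rw [sq]
  exact mul_inv_eq_one.mp h

namespace Baumslag

variable {H : Type*} [Group H] {x y : H}

def lift (h : (y * x * y⁻¹) * x * (y * x * y⁻¹)⁻¹ = x ^ 2) : Baumslag →* H :=
  PresentedGroup.toGroup (f := ![x, y]) (by
    rintro r rfl
    rw [map_mul, map_inv, mul_inv_eq_one]
    simpa [sq] using h)

theorem lift_bgA (h : (y * x * y⁻¹) * x * (y * x * y⁻¹)⁻¹ = x ^ 2) : lift h bgA = x :=
  PresentedGroup.toGroup.of _

theorem lift_bgB (h : (y * x * y⁻¹) * x * (y * x * y⁻¹)⁻¹ = x ^ 2) : lift h bgB = y :=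
  PresentedGroup.toGroup.of _

end Baumslag

theorem exists_coe_eq_a_zpow_and_swapAB_eq_t_zpow (p : Asub) :
    ∃ z : ℤ, (p : SDP) = SDP.a ^ z ∧ (swapAB p : SDP) = SDP.t ^ z := by
  refine ⟨p.2.1.choose, Prod.ext (Subtype.ext ?_) ?_, Prod.ext (Subtype.ext ?_) ?_⟩
  · simpa using p.2.1.choose_spec
  · simpa using p.2.2
  · simp [swapAB]
  · simp [swapAB]

open HNNExtension in
theorem HNNExtension.t_mul_of_a_mul_t_inv :
    (t : HNNExtension SDP Asub Bsub swapAB) * of SDP.a * t⁻¹ = of SDP.t := by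
  obtain ⟨z, ha, hφ⟩ := exists_coe_eq_a_zpow_and_swapAB_eq_t_zpow ⟨SDP.a, ⟨1, by simp⟩, rfl⟩
  have hz : z = 1 := by simpa using congrArg (fun p : SDP => p.1.1) ha.symm
  rw [← zpow_one SDP.t, ← hz, ← hφ, equiv_eq_conj]

open HNNExtension in
noncomputable def toHNN : Baumslag →* HNNExtension SDP Asub Bsub swapAB :=
  Baumslag.lift (x := of SDP.a) (y := t) (by
    rw [t_mul_of_a_mul_t_inv, ← map_inv, ← map_mul, ← map_mul, SDP.t_mul_a_mul_t_inv, map_pow])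

theorem toHNN_bgA : toHNN bgA = HNNExtension.of SDP.a := Baumslag.lift_bgA _

theorem toHNN_bgB : toHNN bgB = HNNExtension.t := Baumslag.lift_bgB _

open HNNExtension in
noncomputable def ofHNN : HNNExtension SDP Asub Bsub swapAB →* Baumslag :=
  lift (SDP.lift bgC_mul_bgA_mul_bgC_inv) bgB fun p => by
    obtain ⟨z, ha, hφ⟩ := exists_coe_eq_a_zpow_and_swapAB_eq_t_zpow p
    rw [ha, hφ, map_zpow, map_zpow, SDP.lift_a, SDP.lift_t, bgC, conj_zpow]
    group

theorem ofHNN_comp_toHNN : ofHNN.comp toHNN = MonoidHom.id Baumslag := by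
  refine PresentedGroup.ext fun i => ?_
  fin_cases i
  · show ofHNN (toHNN bgA) = bgA
    rw [toHNN_bgA, ofHNN, HNNExtension.lift_of, SDP.lift_a]
  · show ofHNN (toHNN bgB) = bgB
    rw [toHNN_bgB, ofHNN, HNNExtension.lift_t]

open HNNExtension in
theorem toHNN_comp_ofHNN : toHNN.comp ofHNN = MonoidHom.id _ := by
  refine hom_ext (SDP.hom_ext ?_ ?_) ?_
  · show toHNN (ofHNN (of SDP.a)) = of SDP.a
    rw [ofHNN, lift_of, SDP.lift_a, toHNN_bgA]
  · show toHNN (ofHNN (of SDP.t)) = of SDP.t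
    rw [ofHNN, lift_of, SDP.lift_t, bgC, map_mul, map_mul, map_inv, toHNN_bgA, toHNN_bgB,
      t_mul_of_a_mul_t_inv]
  · show toHNN (ofHNN t) = t
    rw [ofHNN, lift_t, toHNN_bgB]

/-- The Baumslag group G_(1,2) is isomorphic to the HNN extension of
ℤ[1/2] ⋊ ℤ with associated subgroups A = {(z,0)} and B = {(0,n)} and associating
isomorphism φ(z,0) = (0,z), via an isomorphism sending `a` to the image of `(1,0)`
and `b` to the stable letter. -/
theorem baumslag_iso_hnn :
    ∃ ψ : Baumslag ≃* HNNExtension SDP Asub Bsub swapAB,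
      ψ bgA = HNNExtension.of (G := SDP) (A := Asub) (B := Bsub) (φ := swapAB)
          (((⟨1, isDyadic_one⟩ : ZHalf), (0 : ℤ)) : SDP) ∧
      ψ bgB = HNNExtension.t :=
  ⟨toHNN.toMulEquiv ofHNN ofHNN_comp_toHNN toHNN_comp_ofHNN, toHNN_bgA, toHNN_bgB⟩
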